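/- Let n, k ≥ 1, Θ ∈ ℝ^{n×k}, and let W ∈ ℝ^{(n+k)×(n+k)} be a diagonal matrix with strictly positive diagonal entries; write W_y ∈ ℝ^{n×n} for its top-left n×n diagonal block. Let X = [Θ; I_k] ∈ ℝ^{(n+k)×k} be the vertical stacking of Θ and I_k, let c ∈ ℝ^{n+k}, and write c = (c_yᵀ, c_zᵀ)ᵀ with c_y ∈ ℝⁿ, c_z ∈ ℝ^k. If ẑ ∈ ℝ^k minimizes z ↦ (X z − c)ᵀ W (X z − c), then (Θ ẑ − c_y)ᵀ W_y (Θ ẑ − c_y) ≤ (Θ c_z − c_y)ᵀ W_y (Θ c_z − c_y); i.e., the weighted model residual of the updated estimate is no larger than that of the raw data, since Θ c_z − c_y = [−I_n, Θ] c. -/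
import Mathlib


open Matrix

lemma diag_quad {m : Type*} [Fintype m] [DecidableEq m]
    (W : Matrix m m ℝ) (hWdiag : ∀ i j, i ≠ j → W i j = 0) (v : m → ℝ) :
    v ⬝ᵥ W.mulVec v = ∑ i, W i i * v i ^ 2 := by
  simp only [dotProduct, mulVec]
  refine Finset.sum_congr rfl fun i _ => ?_
  rw [Finset.sum_eq_single i
    (fun j _ hj => by rw [hWdiag i j (Ne.symm hj)]; ring)
    (fun h => absurd (Finset.mem_univ i) h)]
  ring

/-- if `ẑ` minimizes the `W`-weighted cost `(X z − c)ᵀ W (X z − c)`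
for `X = [Θ; I_k]` and a positive diagonal weight `W`, then the `W_y`-weighted
model residual of `ẑ` is no larger than that of the raw data `c_z`. -/
theorem state_update_decreases_model_residual
    (n k : ℕ) (hn : 1 ≤ n) (hk : 1 ≤ k)
    (Θ : Matrix (Fin n) (Fin k) ℝ)
    (W : Matrix (Fin n ⊕ Fin k) (Fin n ⊕ Fin k) ℝ)
    (hWdiag : ∀ i j, i ≠ j → W i j = 0)
    (hWpos : ∀ i, 0 < W i i)
    (c : Fin n ⊕ Fin k → ℝ)
    (zhat : Fin k → ℝ) :
    letI X : Matrix (Fin n ⊕ Fin k) (Fin k) ℝ :=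
      Matrix.fromRows Θ (1 : Matrix (Fin k) (Fin k) ℝ)
    letI Wy : Matrix (Fin n) (Fin n) ℝ := W.submatrix Sum.inl Sum.inl
    letI cy : Fin n → ℝ := fun i => c (Sum.inl i)
    letI cz : Fin k → ℝ := fun i => c (Sum.inr i)
    (∀ z : Fin k → ℝ,
      (X.mulVec zhat - c) ⬝ᵥ W.mulVec (X.mulVec zhat - c) ≤
      (X.mulVec z - c) ⬝ᵥ W.mulVec (X.mulVec z - c)) →
    (Θ.mulVec zhat - cy) ⬝ᵥ Wy.mulVec (Θ.mulVec zhat - cy) ≤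
    (Θ.mulVec cz - cy) ⬝ᵥ Wy.mulVec (Θ.mulVec cz - cy) := by
  intro hmin
  set X : Matrix (Fin n ⊕ Fin k) (Fin k) ℝ :=
    Matrix.fromRows Θ (1 : Matrix (Fin k) (Fin k) ℝ) with hXdef
  set Wy : Matrix (Fin n) (Fin n) ℝ := W.submatrix Sum.inl Sum.inl with hWydef
  set cy : Fin n → ℝ := fun i => c (Sum.inl i) with hcydef
  set cz : Fin k → ℝ := fun i => c (Sum.inr i) with hczdef
  have hWydiag : ∀ i j, i ≠ j → Wy i j = 0 := fun i j h =>
    hWdiag _ _ (fun e => h (Sum.inl_injective e))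
  have key := hmin cz
  rw [diag_quad W hWdiag, diag_quad W hWdiag] at key
  rw [diag_quad Wy hWydiag, diag_quad Wy hWydiag]
  have hX : ∀ (z : Fin k → ℝ),
      (∀ i, (X.mulVec z - c) (Sum.inl i) = (Θ.mulVec z - cy) i) ∧
      (∀ j, (X.mulVec z - c) (Sum.inr j) = z j - cz j) := by
    intro z
    constructor
    · intro i; simp [hXdef, mulVec, dotProduct, hcydef]
    · intro j
      simp [hXdef, mulVec, hczdef, Matrix.one_apply, dotProduct]
  rw [Fintype.sum_sum_type, Fintype.sum_sum_type] at key
  have e1 : ∀ i, W (Sum.inl i) (Sum.inl i) *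
      ((X.mulVec zhat - c) (Sum.inl i)) ^ 2 =
      Wy i i * ((Θ.mulVec zhat - cy) i) ^ 2 := by
    intro i; rw [(hX zhat).1 i]; rfl
  have e2 : ∀ i, W (Sum.inl i) (Sum.inl i) *
      ((X.mulVec cz - c) (Sum.inl i)) ^ 2 =
      Wy i i * ((Θ.mulVec cz - cy) i) ^ 2 := by
    intro i; rw [(hX cz).1 i]; rfl
  have e3 : ∀ j, W (Sum.inr j) (Sum.inr j) *
      ((X.mulVec cz - c) (Sum.inr j)) ^ 2 = 0 := by
    intro j; rw [(hX cz).2 j]; simp [hczdef]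
  rw [Finset.sum_congr rfl (fun i _ => e1 i),
      Finset.sum_congr rfl (fun i _ => e2 i),
      Finset.sum_congr rfl (fun j _ => e3 j)] at key
  simp only [Finset.sum_const_zero, add_zero] at key
  have hnn : 0 ≤ ∑ j, W (Sum.inr j) (Sum.inr j) *
      ((X.mulVec zhat - c) (Sum.inr j)) ^ 2 :=
    Finset.sum_nonneg fun j _ =>
      mul_nonneg (hWpos _).le (sq_nonneg _)
  linarith
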